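/- arXiv:2010.16093 — 4 statements merged into one kernel-verified Lean document; each statement's English description precedes it below -/
import Mathlib

section
/- Let s be a fixed complex parameter with s ≠ ±1, s ≠ 0, and define x(t) = -(st² + s + 2t)(2st + t² + 1)s / (4(s+1)²(s-1)²t²) and y(t) = (t+1)²/(2t) for t ≠ 0. Then, denoting by ẋ and ẏ the derivatives of x and y with respect to t, the identity -2y(y-2)ẋ² + 2(y-1)(4x-1)ẋẏ - 2x(4x-1)ẏ² = 0 holds identically in t (for all t ≠ 0 where all expressions are defined). -/
/-- The parametrization `x(t)` of the first argument of Horn's `H₄` used in the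
derivation of its Bailey-type factorization (for a fixed parameter `s`). -/
noncomputable def xH4 (s t : ℂ) : ℂ :=
  -((s * t ^ 2 + s + 2 * t) * (2 * s * t + t ^ 2 + 1) * s) /
    (4 * (s + 1) ^ 2 * (s - 1) ^ 2 * t ^ 2)

/-- The parametrization `y(t)` of the second argument of Horn's `H₄`. -/
noncomputable def yH4 (t : ℂ) : ℂ := (t + 1) ^ 2 / (2 * t)

theorem hasDerivAt_yH4 {t : ℂ} (ht : t ≠ 0) :
    HasDerivAt yH4 ((t ^ 2 - 1) / (2 * t ^ 2)) t := by
  have hnum : HasDerivAt (fun u : ℂ => (u + 1) ^ 2) (2 * (t + 1)) t := by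
    simpa using ((hasDerivAt_id t).add_const 1).fun_pow 2
  have hden : HasDerivAt (fun u : ℂ => 2 * u) 2 t := by
    simpa using (hasDerivAt_id t).const_mul 2
  refine (hnum.fun_div hden (mul_ne_zero two_ne_zero ht)).congr_deriv ?_
  field_simp
  ring

/-- Up to a constant factor, `x(t) = (s t⁴ + 2(s² + 1) t³ + 6 s t² + 2(s² + 1) t + s) / t²` is
invariant under `t ↦ 1/t`, which is why its derivative has the factor `t² - 1`. -/
theorem hasDerivAt_xH4 {s t : ℂ} (hs1 : s ≠ 1) (hsm1 : s ≠ -1) (ht : t ≠ 0) :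
    HasDerivAt (xH4 s)
      (-s * (t ^ 2 - 1) * (s * t + 1) * (t + s) / (2 * (s + 1) ^ 2 * (s - 1) ^ 2 * t ^ 3)) t := by
  have hs1' : s - 1 ≠ 0 := sub_ne_zero.2 hs1
  have hsm1' : s + 1 ≠ 0 := by rwa [← sub_neg_eq_add, sub_ne_zero]
  have hnum : HasDerivAt (fun u : ℂ => -((s * u ^ 2 + s + 2 * u) * (2 * s * u + u ^ 2 + 1) * s))
      (-(((s * (2 * t) + 2) * (2 * s * t + t ^ 2 + 1)
        + (s * t ^ 2 + s + 2 * t) * (2 * s + 2 * t)) * s)) t := by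
    have hA : HasDerivAt (fun u : ℂ => s * u ^ 2 + s + 2 * u) (s * (2 * t) + 2) t := by
      simpa using ((((hasDerivAt_pow 2 t).const_mul s).add_const s).fun_add
        ((hasDerivAt_id t).const_mul 2))
    have hB : HasDerivAt (fun u : ℂ => 2 * s * u + u ^ 2 + 1) (2 * s + 2 * t) t := by
      simpa using (((hasDerivAt_id t).const_mul (2 * s)).fun_add (hasDerivAt_pow 2 t)).add_const 1
    exact ((hA.fun_mul hB).mul_const s).fun_neg
  have hden : HasDerivAt (fun u : ℂ => 4 * (s + 1) ^ 2 * (s - 1) ^ 2 * u ^ 2)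
      (4 * (s + 1) ^ 2 * (s - 1) ^ 2 * (2 * t)) t := by
    simpa using (hasDerivAt_pow 2 t).const_mul (4 * (s + 1) ^ 2 * (s - 1) ^ 2)
  refine (hnum.fun_div hden (by simp [hs1', hsm1', ht])).congr_deriv ?_
  field_simp
  ring

theorem hornH4_Fxy_coefficient_vanishes_general (s : ℂ) (hs1 : s ≠ 1) (hsm1 : s ≠ -1)
    (t : ℂ) (ht : t ≠ 0) :
    -2 * yH4 t * (yH4 t - 2) * (deriv (xH4 s) t) ^ 2
      + 2 * (yH4 t - 1) * (4 * xH4 s t - 1) * deriv (xH4 s) t * deriv yH4 t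
      - 2 * xH4 s t * (4 * xH4 s t - 1) * (deriv yH4 t) ^ 2 = 0 := by
  have hs1' : s - 1 ≠ 0 := sub_ne_zero.2 hs1
  have hsm1' : s + 1 ≠ 0 := by rwa [← sub_neg_eq_add, sub_ne_zero]
  rw [(hasDerivAt_xH4 hs1 hsm1 ht).deriv, (hasDerivAt_yH4 ht).deriv, xH4, yH4]
  field_simp
  ring

/-- For fixed `s ≠ 0, ±1` and the curves `x(t) = -(st²+s+2t)(2st+t²+1)s/(4(s+1)²(s-1)²t²)`,
`y(t) = (t+1)²/(2t)`, the numerator of the coefficient of `F_xy` in the reduction of the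
`H₄` system vanishes identically:
`-2y(y-2)ẋ² + 2(y-1)(4x-1)ẋẏ - 2x(4x-1)ẏ² = 0` for all `t ≠ 0`. -/
theorem hornH4_Fxy_coefficient_vanishes (s : ℂ) (hs0 : s ≠ 0) (hs1 : s ≠ 1) (hsm1 : s ≠ -1)
    (t : ℂ) (ht : t ≠ 0) :
    -2 * yH4 t * (yH4 t - 2) * (deriv (xH4 s) t) ^ 2
      + 2 * (yH4 t - 1) * (4 * xH4 s t - 1) * deriv (xH4 s) t * deriv yH4 t
      - 2 * xH4 s t * (4 * xH4 s t - 1) * (deriv yH4 t) ^ 2 = 0 :=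
  hornH4_Fxy_coefficient_vanishes_general s hs1 hsm1 t ht
end

section
/- The substitution σ = -(s²+1)/(s²-1), τ = (st+1)/(st-1) transforms the pair of rational functions (x(σ,τ), y(σ,τ)) = (-(στ² + σ + 2τ)(2στ + τ² + 1)σ / (4(σ²-1)²τ²), (τ+1)²/(2τ)) into the pair ((s⁴-1)(t⁴-1)/(4(s²t²-1)²), 2s²t²/(s²t²-1)); in particular both resulting rational functions are symmetric under interchanging s and t. This is an identity of rational functions in s and t, valid wherever all expressions are defined (s² ≠ 1, st ≠ ±1, etc.). -/
/-!
With `u = s²` and `p = st`, both factors of the numerator of `x` and the factor `σ² - 1` of its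
denominator collapse to monomials over the common denominators `(u - 1)(p - 1)²` and `(u - 1)²`:
`στ² + σ + 2τ ∝ -(u + p²) = -s²(1 + t²)`, `2στ + τ² + 1 ∝ u - p² = s²(1 - t²)` and
`σ² - 1 = 4u/(u - 1)²`. The powers of `s` then cancel and `x` becomes symmetric.
-/

namespace HornH4

variable {K : Type*} [Field K] {σ τ u p : K}

theorem sq_sub_one_eq (hσ : σ = -(u + 1) / (u - 1)) (hu : u - 1 ≠ 0) :
    σ ^ 2 - 1 = 4 * u / (u - 1) ^ 2 := by
  rw [hσ]; field_simp; ring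

theorem mul_sq_add_add_two_mul_eq (hσ : σ = -(u + 1) / (u - 1))
    (hτ : τ = (p + 1) / (p - 1)) (hu : u - 1 ≠ 0) (hp : p - 1 ≠ 0) :
    σ * τ ^ 2 + σ + 2 * τ = -4 * (u + p ^ 2) / ((u - 1) * (p - 1) ^ 2) := by
  rw [hσ, hτ]; field_simp; ring

theorem two_mul_mul_add_sq_add_one_eq (hσ : σ = -(u + 1) / (u - 1))
    (hτ : τ = (p + 1) / (p - 1)) (hu : u - 1 ≠ 0) (hp : p - 1 ≠ 0) :
    2 * σ * τ + τ ^ 2 + 1 = 4 * (u - p ^ 2) / ((u - 1) * (p - 1) ^ 2) := by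
  rw [hσ, hτ]; field_simp; ring

theorem add_one_sq_div_two_mul_eq [NeZero (2 : K)] (hτ : τ = (p + 1) / (p - 1))
    (hp : p - 1 ≠ 0) (hp' : p + 1 ≠ 0) :
    (τ + 1) ^ 2 / (2 * τ) = 2 * p ^ 2 / (p ^ 2 - 1) := by
  have hp2 : p ^ 2 - 1 ≠ 0 := by
    rw [show p ^ 2 - 1 = (p - 1) * (p + 1) by ring]
    exact mul_ne_zero hp hp'
  rw [hτ]; field_simp; ring

end HornH4

open HornH4 in
/-- The substitution `σ = -(s²+1)/(s²-1)`, `τ = (st+1)/(st-1)` transforms the pair of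
rational functions
`(x(σ,τ), y(σ,τ)) = (-(στ²+σ+2τ)(2στ+τ²+1)σ/(4(σ²-1)²τ²), (τ+1)²/(2τ))`
(the parametrization of the arguments of Horn's `H₄`) into the pair
`((s⁴-1)(t⁴-1)/(4(s²t²-1)²), 2s²t²/(s²t²-1))`, which is symmetric in `s` and `t`;
valid wherever all expressions are defined. -/
theorem hornH4_argument_symmetrization (s t σ τ : ℂ)
    (hσ : σ = -(s ^ 2 + 1) / (s ^ 2 - 1))
    (hτ : τ = (s * t + 1) / (s * t - 1))
    (hs0 : s ≠ 0) (hs : s ^ 2 ≠ 1)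
    (h1 : s * t ≠ 1) (h2 : s * t ≠ -1) :
    -((σ * τ ^ 2 + σ + 2 * τ) * (2 * σ * τ + τ ^ 2 + 1) * σ) /
        (4 * (σ ^ 2 - 1) ^ 2 * τ ^ 2) =
      (s ^ 4 - 1) * (t ^ 4 - 1) / (4 * (s ^ 2 * t ^ 2 - 1) ^ 2) ∧
    (τ + 1) ^ 2 / (2 * τ) = 2 * s ^ 2 * t ^ 2 / (s ^ 2 * t ^ 2 - 1) := by
  have hu : s ^ 2 - 1 ≠ 0 := sub_ne_zero.mpr hs
  have hp : s * t - 1 ≠ 0 := sub_ne_zero.mpr h1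
  have hp' : s * t + 1 ≠ 0 := by rwa [← sub_neg_eq_add, sub_ne_zero]
  have hp2 : s ^ 2 * t ^ 2 - 1 ≠ 0 := by
    rw [show s ^ 2 * t ^ 2 - 1 = (s * t - 1) * (s * t + 1) by ring]
    exact mul_ne_zero hp hp'
  constructor
  · rw [mul_sq_add_add_two_mul_eq hσ hτ hu hp, two_mul_mul_add_sq_add_one_eq hσ hτ hu hp,
      sq_sub_one_eq hσ hu, hσ, hτ]
    field_simp
    ring
  · rw [add_one_sq_div_two_mul_eq hτ hp hp', mul_pow]
    ring
end

section
/- Under the substitution s = u/2 and t = -(u+v)/(2(3uv+1)), the following identities of rational functions in u and v hold wherever defined: (i) t² = (u+v)²/(4(3uv+1)²); (ii) 4(144s²t² + 4s² + 32st + 4t² + 1)(4s² + 1)(s+t)s / ((12s² - 1)³ t²) = 4(u²+1)(v²+1)uv / ((3uv+1)(u+v)²); and (iii) -4(s+t)²/(12st+1)² = -v². In particular, the pair of rational functions in (i) and (ii) is symmetric under interchanging u and v, and the expression in (iii) is independent of u. -/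
/-!
The substitution for `t` is precisely the solution of the relation `2(s + t) + v(12st + 1) = 0`,
which is linear in `t`. Thus `v = -2(s + t)/(12st + 1)`, and the `₂F₁`-argument is `-v²` at once.
Since `144s²t² + 4s² + 32st + 4t² + 1 = 4(s + t)² + (12st + 1)²`, the same relation turns this
factor of `y` into `(v² + 1)(12st + 1)²`, and with `(3uv + 1)(12st + 1) = 1 - 3u² = 1 - 12s²`
all powers of `12st + 1` cancel from `y`.
-/

namespace HornH5

section CommRing

variable {R : Type*} [CommRing R] {s t u v : R}

theorem quartic_eq_sq_add_sq (s t : R) :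
    144 * s ^ 2 * t ^ 2 + 4 * s ^ 2 + 32 * s * t + 4 * t ^ 2 + 1 =
      4 * (s + t) ^ 2 + (12 * s * t + 1) ^ 2 := by
  ring

theorem two_mul_add_eq (hs : 2 * s = u) (ht : 2 * (3 * u * v + 1) * t = -(u + v)) :
    2 * (s + t) = -(v * (12 * s * t + 1)) := by
  subst hs
  linear_combination ht

theorem mul_twelve_mul_add_one (hs : 2 * s = u) (ht : 2 * (3 * u * v + 1) * t = -(u + v)) :
    (3 * u * v + 1) * (12 * s * t + 1) = 1 - 3 * u ^ 2 := by
  subst hs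
  linear_combination 6 * s * ht

theorem quartic_eq_of_two_mul_add_eq (h : 2 * (s + t) = -(v * (12 * s * t + 1))) :
    144 * s ^ 2 * t ^ 2 + 4 * s ^ 2 + 32 * s * t + 4 * t ^ 2 + 1 =
      (v ^ 2 + 1) * (12 * s * t + 1) ^ 2 := by
  rw [quartic_eq_sq_add_sq]
  linear_combination (2 * (s + t) - v * (12 * s * t + 1)) * h

end CommRing

section Field

variable {K : Type*} [Field K] {s t u v : K}

theorem twoF1_argument_eq (h : 2 * (s + t) = -(v * (12 * s * t + 1)))
    (hw : 12 * s * t + 1 ≠ 0) :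
    -4 * (s + t) ^ 2 / (12 * s * t + 1) ^ 2 = -v ^ 2 := by
  rw [div_eq_iff (pow_ne_zero 2 hw)]
  linear_combination -(2 * (s + t) - v * (12 * s * t + 1)) * h

theorem second_argument_eq (h4 : (4 : K) ≠ 0) (hs : 2 * s = u)
    (ht : 2 * (3 * u * v + 1) * t = -(u + v)) (hw : 12 * s * t + 1 ≠ 0) :
    4 * (144 * s ^ 2 * t ^ 2 + 4 * s ^ 2 + 32 * s * t + 4 * t ^ 2 + 1) *
        (4 * s ^ 2 + 1) * (s + t) * s / ((12 * s ^ 2 - 1) ^ 3 * t ^ 2) =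
      4 * (u ^ 2 + 1) * (v ^ 2 + 1) * u * v / ((3 * u * v + 1) * (u + v) ^ 2) := by
  have hrel := two_mul_add_eq hs ht
  have hnum : 4 * (144 * s ^ 2 * t ^ 2 + 4 * s ^ 2 + 32 * s * t + 4 * t ^ 2 + 1) *
      (4 * s ^ 2 + 1) * (s + t) * s =
      (u ^ 2 + 1) * (v ^ 2 + 1) * u * v * (-(12 * s * t + 1) ^ 3) := by
    rw [quartic_eq_of_two_mul_add_eq hrel, ← hs]
    linear_combination (v ^ 2 + 1) * (12 * s * t + 1) ^ 2 * (4 * s ^ 2 + 1) * 2 * s * hrel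
  have hden : (12 * s ^ 2 - 1) ^ 3 * t ^ 2 =
      (3 * u * v + 1) ^ 3 * t ^ 2 * (-(12 * s * t + 1) ^ 3) := by
    have h12 : 12 * s ^ 2 - 1 = -((3 * u * v + 1) * (12 * s * t + 1)) := by
      rw [mul_twelve_mul_add_one hs ht, ← hs]
      ring
    rw [h12]
    ring
  have hsum : (3 * u * v + 1) * (u + v) ^ 2 = 4 * ((3 * u * v + 1) ^ 3 * t ^ 2) := by
    rw [← neg_sq, ← ht]
    ring
  rw [hnum, hden, hsum, mul_div_mul_right _ _ (neg_ne_zero.2 (pow_ne_zero 3 hw)),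
    show 4 * (u ^ 2 + 1) * (v ^ 2 + 1) * u * v = 4 * ((u ^ 2 + 1) * (v ^ 2 + 1) * u * v) by ring,
    mul_div_mul_left _ _ h4]

end Field

end HornH5

theorem hornH5_argument_symmetrization_general (u v s t : ℂ)
    (hs : s = u / 2)
    (ht : t = -(u + v) / (2 * (3 * u * v + 1)))
    (h1 : 3 * u * v + 1 ≠ 0) (h3 : 3 * u ^ 2 - 1 ≠ 0) :
    t ^ 2 = (u + v) ^ 2 / (4 * (3 * u * v + 1) ^ 2) ∧
    4 * (144 * s ^ 2 * t ^ 2 + 4 * s ^ 2 + 32 * s * t + 4 * t ^ 2 + 1) *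
        (4 * s ^ 2 + 1) * (s + t) * s / ((12 * s ^ 2 - 1) ^ 3 * t ^ 2) =
      4 * (u ^ 2 + 1) * (v ^ 2 + 1) * u * v / ((3 * u * v + 1) * (u + v) ^ 2) ∧
    -4 * (s + t) ^ 2 / (12 * s * t + 1) ^ 2 = -v ^ 2 := by
  have hs' : 2 * s = u := by rw [hs, mul_div_cancel₀ _ two_ne_zero]
  have ht' : 2 * (3 * u * v + 1) * t = -(u + v) := by
    rw [ht, mul_div_cancel₀ _ (mul_ne_zero two_ne_zero h1)]
  have hw : 12 * s * t + 1 ≠ 0 := by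
    refine right_ne_zero_of_mul (a := 3 * u * v + 1) ?_
    rw [HornH5.mul_twelve_mul_add_one hs' ht']
    exact fun h => h3 (by linear_combination -h)
  refine ⟨?_, HornH5.second_argument_eq (by norm_num) hs' ht' hw,
    HornH5.twoF1_argument_eq (HornH5.two_mul_add_eq hs' ht') hw⟩
  rw [ht, div_pow, neg_sq, mul_pow]
  norm_num

/-- Under the substitution `s = u/2`, `t = -(u+v)/(2(3uv+1))`, the parametrization
`(x(s,t), y(s,t)) = (t², 4(144s²t²+4s²+32st+4t²+1)(4s²+1)(s+t)s/((12s²-1)³t²))` of the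
arguments of Horn's `H₅` becomes `((u+v)²/(4(3uv+1)²), 4(u²+1)(v²+1)uv/((3uv+1)(u+v)²))`,
symmetric in `u` and `v`, while the `₂F₁`-argument `-4(s+t)²/(12st+1)²` becomes `-v²`,
independent of `u`; all identities hold as rational identities wherever defined. -/
theorem hornH5_argument_symmetrization (u v s t : ℂ)
    (hs : s = u / 2)
    (ht : t = -(u + v) / (2 * (3 * u * v + 1)))
    (h1 : 3 * u * v + 1 ≠ 0) (h2 : u + v ≠ 0) (h3 : 3 * u ^ 2 - 1 ≠ 0) :
    t ^ 2 = (u + v) ^ 2 / (4 * (3 * u * v + 1) ^ 2) ∧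
    4 * (144 * s ^ 2 * t ^ 2 + 4 * s ^ 2 + 32 * s * t + 4 * t ^ 2 + 1) *
        (4 * s ^ 2 + 1) * (s + t) * s / ((12 * s ^ 2 - 1) ^ 3 * t ^ 2) =
      4 * (u ^ 2 + 1) * (v ^ 2 + 1) * u * v / ((3 * u * v + 1) * (u + v) ^ 2) ∧
    -4 * (s + t) ^ 2 / (12 * s * t + 1) ^ 2 = -v ^ 2 :=
  hornH5_argument_symmetrization_general u v s t hs ht h1 h3
end

section
/- The substitution σ = -(s²+1)/(s²-1), τ = (st+1)/(st-1) transforms the pair of rational functions (x(σ,τ), y(σ,τ)) = (-(στ² + σ + 2τ)(2στ + τ² + 1)σ / ((σ²-1)²τ²), τ²) into the pair ((s⁴-1)(t⁴-1)/(s²t²-1)², ((st+1)/(st-1))²); in particular both resulting rational functions are symmetric under interchanging s and t. This is an identity of rational functions in s and t, valid wherever all expressions are defined (s² ≠ 1, st ≠ ±1, etc.). -/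
/-! Under the substitution both factors of the numerator of `x` and the denominator
`σ² - 1` become monomials in `s` times powers of `s² - 1` and `st - 1`:
`στ² + σ + 2τ = -4s²(t² + 1)/((s² - 1)(st - 1)²)`,
`2στ + τ² + 1 = -4s²(t² - 1)/((s² - 1)(st - 1)²)` and `σ² - 1 = 4s²/(s² - 1)²`.
The factors `16 s⁴` cancel, leaving `(s⁴ - 1)(t⁴ - 1)/(s²t² - 1)²`. -/

section Substitution

variable {K : Type*} [Field K] {s t : K}

lemma sigma_sq_sub_one (hs : s ^ 2 - 1 ≠ 0) :
    (-(s ^ 2 + 1) / (s ^ 2 - 1)) ^ 2 - 1 = 4 * s ^ 2 / (s ^ 2 - 1) ^ 2 := by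
  field_simp
  ring

lemma sigma_mul_tau_sq_add_sigma_add_two_mul_tau (hs : s ^ 2 - 1 ≠ 0) (hst : s * t - 1 ≠ 0) :
    -(s ^ 2 + 1) / (s ^ 2 - 1) * ((s * t + 1) / (s * t - 1)) ^ 2
        + -(s ^ 2 + 1) / (s ^ 2 - 1) + 2 * ((s * t + 1) / (s * t - 1)) =
      -4 * s ^ 2 * (t ^ 2 + 1) / ((s ^ 2 - 1) * (s * t - 1) ^ 2) := by
  field_simp
  ring

lemma two_mul_sigma_mul_tau_add_tau_sq_add_one (hs : s ^ 2 - 1 ≠ 0) (hst : s * t - 1 ≠ 0) :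
    2 * (-(s ^ 2 + 1) / (s ^ 2 - 1)) * ((s * t + 1) / (s * t - 1))
        + ((s * t + 1) / (s * t - 1)) ^ 2 + 1 =
      -4 * s ^ 2 * (t ^ 2 - 1) / ((s ^ 2 - 1) * (s * t - 1) ^ 2) := by
  field_simp
  ring

end Substitution

/-- The substitution `σ = -(s²+1)/(s²-1)`, `τ = (st+1)/(st-1)` transforms the pair of
rational functions
`(x(σ,τ), y(σ,τ)) = (-(στ²+σ+2τ)(2στ+τ²+1)σ/((σ²-1)²τ²), τ²)`
(the parametrization of the arguments of Horn's `H₁`) into the pair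
`((s⁴-1)(t⁴-1)/(s²t²-1)², ((st+1)/(st-1))²)`, which is symmetric in `s` and `t`;
valid wherever all expressions are defined. -/
theorem hornH1_argument_symmetrization (s t σ τ : ℂ)
    (hσ : σ = -(s ^ 2 + 1) / (s ^ 2 - 1))
    (hτ : τ = (s * t + 1) / (s * t - 1))
    (hs0 : s ≠ 0) (hs : s ^ 2 ≠ 1)
    (h1 : s * t ≠ 1) (h2 : s * t ≠ -1) :
    -((σ * τ ^ 2 + σ + 2 * τ) * (2 * σ * τ + τ ^ 2 + 1) * σ) /
        ((σ ^ 2 - 1) ^ 2 * τ ^ 2) =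
      (s ^ 4 - 1) * (t ^ 4 - 1) / (s ^ 2 * t ^ 2 - 1) ^ 2 ∧
    τ ^ 2 = ((s * t + 1) / (s * t - 1)) ^ 2 := by
  have hs' : s ^ 2 - 1 ≠ 0 := sub_ne_zero.mpr hs
  have hst : s * t - 1 ≠ 0 := sub_ne_zero.mpr h1
  have hst' : s * t + 1 ≠ 0 := by rwa [← sub_neg_eq_add, sub_ne_zero]
  have hst2 : s ^ 2 * t ^ 2 - 1 ≠ 0 := by
    rw [show s ^ 2 * t ^ 2 - 1 = (s * t - 1) * (s * t + 1) by ring]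
    exact mul_ne_zero hst hst'
  subst hσ hτ
  refine ⟨?_, rfl⟩
  rw [sigma_mul_tau_sq_add_sigma_add_two_mul_tau hs' hst,
    two_mul_sigma_mul_tau_add_tau_sq_add_one hs' hst, sigma_sq_sub_one hs']
  field_simp
  ring
end
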